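/- arXiv:1011.1384 — 5 statements merged into one kernel-verified Lean document; each statement's English description precedes it below -/
import Mathlib

section
/- Let h : ℝ^k → ℝ be (M, ℓ∞)-Lipschitz with h(0) = 0. For J ⊂ {1, …, k} define f_J(t) = ∑_{I ⊂ J} (−1)^{|J| − |I|} h(π_I t), where π_I t replaces by 0 all coordinates of t outside I. Then: (i) h(t) = ∑_{J ⊂ {1,…,k}} f_J(t) for all t; (ii) for |J| = s > 0, f_J is ((2^s − 1) M, ℓ∞)-Lipschitz; (iii) f_J(t) depends only on the coordinates t_j with j ∈ J, and f_J(t) = 0 whenever t_j = 0 for some j ∈ J. -/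
open Finset
lemma moebius_sum {α : Type*} [DecidableEq α] (S : Finset α) :
    ∀ g : Finset α → ℝ,
      ∑ J ∈ S.powerset, ∑ I ∈ J.powerset, (-1 : ℝ) ^ (J.card - I.card) * g I = g S := by
  induction S using Finset.induction_on with
  | empty => intro g; simp
  | @insert a S ha ih =>
    intro g
    have hdisj : Disjoint S.powerset (S.powerset.image (insert a)) := by
      rw [Finset.disjoint_left]
      intro J hJ hJ'
      simp only [mem_image, mem_powerset] at hJ hJ'
      obtain ⟨I, hIS, rfl⟩ := hJ'
      exact ha (hJ (mem_insert_self a I))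
    have hinj : ∀ I ∈ S.powerset, ∀ I' ∈ S.powerset, insert a I = insert a I' → I = I' := by
      intro I hI I' hI' hEq
      simp only [mem_powerset] at hI hI'
      have h1 : a ∉ I := fun hx => ha (hI hx)
      have h2 : a ∉ I' := fun hx => ha (hI' hx)
      rw [← Finset.erase_insert h1, ← Finset.erase_insert h2, hEq]
    rw [Finset.powerset_insert, Finset.sum_union hdisj, Finset.sum_image hinj]
    have key : ∀ J ∈ S.powerset,
        (∑ I ∈ (insert a J).powerset, (-1 : ℝ) ^ ((insert a J).card - I.card) * g I)
        = -(∑ I ∈ J.powerset, (-1 : ℝ) ^ (J.card - I.card) * g I)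
          + ∑ I ∈ J.powerset, (-1 : ℝ) ^ (J.card - I.card) * g (insert a I) := by
      intro J hJ
      simp only [mem_powerset] at hJ
      have haJ : a ∉ J := fun hx => ha (hJ hx)
      have hdisjJ : Disjoint J.powerset (J.powerset.image (insert a)) := by
        rw [Finset.disjoint_left]
        intro I hI hI'
        simp only [mem_image, mem_powerset] at hI hI'
        obtain ⟨I', hI'S, rfl⟩ := hI'
        exact haJ (hI (mem_insert_self a I'))
      have hinjJ : ∀ I ∈ J.powerset, ∀ I' ∈ J.powerset, insert a I = insert a I' → I = I' := by
        intro I hI I' hI' hEq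
        simp only [mem_powerset] at hI hI'
        have h1 : a ∉ I := fun hx => haJ (hI hx)
        have h2 : a ∉ I' := fun hx => haJ (hI' hx)
        rw [← Finset.erase_insert h1, ← Finset.erase_insert h2, hEq]
      rw [Finset.powerset_insert, Finset.sum_union hdisjJ, Finset.sum_image hinjJ,
        Finset.card_insert_of_notMem haJ]
      rw [← Finset.sum_neg_distrib]
      congr 1
      · apply Finset.sum_congr rfl
        intro I hI
        simp only [mem_powerset] at hI
        have hle : I.card ≤ J.card := Finset.card_le_card hI
        have : J.card + 1 - I.card = (J.card - I.card) + 1 := by omega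
        rw [this, pow_succ]
        ring
      · apply Finset.sum_congr rfl
        intro I hI
        simp only [mem_powerset] at hI
        have haI : a ∉ I := fun hx => haJ (hI hx)
        rw [Finset.card_insert_of_notMem haI]
        congr 2
        omega
    rw [Finset.sum_congr rfl key, Finset.sum_add_distrib, Finset.sum_neg_distrib]
    have := ih (fun I => g (insert a I))
    linarith [this]


/-- decomposition of an `(M, ℓ∞)`-Lipschitz function `h` with `h 0 = 0`
into a sum of functions `f J` each of which is `((2^|J| - 1) M, ℓ∞)`-Lipschitz, depends
only on the coordinates in `J`, and vanishes whenever some coordinate in `J` is zero.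
Here `π_I t` is formalized as `fun j => if j ∈ I then t j else 0`, and the norm `‖·‖`
on `Fin k → ℝ` is the sup (ℓ∞) norm. -/
theorem stmt4 (k : ℕ) (M : ℝ) (h : (Fin k → ℝ) → ℝ)
    (hLip : ∀ s t : Fin k → ℝ, |h t - h s| ≤ M * ‖t - s‖)
    (h0 : h 0 = 0)
    (f : Finset (Fin k) → (Fin k → ℝ) → ℝ)
    (hf : ∀ (J : Finset (Fin k)) (t : Fin k → ℝ),
      f J t = ∑ I ∈ J.powerset,
        (-1 : ℝ) ^ (J.card - I.card) * h (fun j => if j ∈ I then t j else 0)) :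
    (∀ t : Fin k → ℝ, h t = ∑ J : Finset (Fin k), f J t) ∧
    (∀ J : Finset (Fin k), J.Nonempty →
      ∀ s t : Fin k → ℝ, |f J t - f J s| ≤ ((2 : ℝ) ^ J.card - 1) * M * ‖t - s‖) ∧
    (∀ J : Finset (Fin k), ∀ s t : Fin k → ℝ,
      (∀ j ∈ J, s j = t j) → f J s = f J t) ∧
    (∀ J : Finset (Fin k), ∀ t : Fin k → ℝ, (∃ j ∈ J, t j = 0) → f J t = 0) := by
  refine ⟨?_, ?_, ?_, ?_⟩
  · -- (i)
    intro t
    have key := moebius_sum (univ : Finset (Fin k))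
      (fun I => h (fun j => if j ∈ I then t j else 0))
    simp only [Finset.mem_univ, if_true] at key
    rw [show ∑ J : Finset (Fin k), f J t
        = ∑ J ∈ (univ : Finset (Fin k)).powerset, f J t by rw [Finset.powerset_univ],
      Finset.sum_congr rfl (fun J _ => hf J t)]
    exact key.symm
  · -- (ii)
    intro J hJ s t
    obtain ⟨j0, hj0⟩ := hJ
    have hM : 0 ≤ M := by
      have hne : Nonempty (Fin k) := ⟨j0⟩
      have h1 := hLip 0 (fun _ => (1 : ℝ))
      have hnorm : ‖(fun _ => (1:ℝ)) - (0 : Fin k → ℝ)‖ = 1 := by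
        simp [pi_norm_const]
      rw [hnorm, mul_one] at h1
      exact le_trans (abs_nonneg _) h1
    have hterm : ∀ I : Finset (Fin k),
        |h (fun j => if j ∈ I then t j else 0) - h (fun j => if j ∈ I then s j else 0)|
          ≤ M * ‖t - s‖ := by
      intro I
      refine le_trans (hLip _ _) (mul_le_mul_of_nonneg_left ?_ hM)
      rw [pi_norm_le_iff_of_nonneg (norm_nonneg _)]
      intro i
      simp only [Pi.sub_apply]
      by_cases hi : i ∈ I
      · simp only [hi, if_true]
        exact norm_le_pi_norm (t - s) i
      · simp [hi]
    rw [hf, hf, ← Finset.sum_sub_distrib]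
    have hsplit : ∀ I : Finset (Fin k),
        (-1:ℝ) ^ (J.card - I.card) * h (fun j => if j ∈ I then t j else 0)
          - (-1:ℝ) ^ (J.card - I.card) * h (fun j => if j ∈ I then s j else 0)
        = (-1:ℝ) ^ (J.card - I.card) *
            (h (fun j => if j ∈ I then t j else 0) - h (fun j => if j ∈ I then s j else 0)) := by
      intro I; ring
    rw [Finset.sum_congr rfl (fun I _ => hsplit I)]
    have hemp : (∅ : Finset (Fin k)) ∈ J.powerset := Finset.empty_mem_powerset J
    rw [← Finset.add_sum_erase _ _ hemp]
    have hzero : (-1:ℝ) ^ (J.card - (∅ : Finset (Fin k)).card) *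
        (h (fun j => if j ∈ (∅ : Finset (Fin k)) then t j else 0)
          - h (fun j => if j ∈ (∅ : Finset (Fin k)) then s j else 0)) = 0 := by
      simp only [Finset.notMem_empty, if_false]
      norm_num
    rw [hzero, zero_add]
    calc |∑ I ∈ J.powerset.erase ∅, (-1:ℝ) ^ (J.card - I.card) *
            (h (fun j => if j ∈ I then t j else 0) - h (fun j => if j ∈ I then s j else 0))|
        ≤ ∑ I ∈ J.powerset.erase ∅, |(-1:ℝ) ^ (J.card - I.card) *
            (h (fun j => if j ∈ I then t j else 0) - h (fun j => if j ∈ I then s j else 0))| :=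
          Finset.abs_sum_le_sum_abs _ _
      _ ≤ ∑ I ∈ J.powerset.erase ∅, M * ‖t - s‖ := by
          apply Finset.sum_le_sum
          intro I _
          rw [abs_mul, abs_pow, abs_neg, abs_one, one_pow, one_mul]
          exact hterm I
      _ = ((J.powerset.erase ∅).card : ℝ) * (M * ‖t - s‖) := by
          rw [Finset.sum_const, nsmul_eq_mul]
      _ = ((2:ℝ) ^ J.card - 1) * M * ‖t - s‖ := by
          rw [Finset.card_erase_of_mem hemp, Finset.card_powerset]
          have h2 : 1 ≤ 2 ^ J.card := Nat.one_le_two_pow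
          push_cast [h2]
          ring
  · -- (iii)
    intro J s t hst
    rw [hf, hf]
    apply Finset.sum_congr rfl
    intro I hI
    simp only [Finset.mem_powerset] at hI
    congr 1
    congr 1
    funext j
    by_cases hj : j ∈ I
    · simp only [hj, if_true]; exact hst j (hI hj)
    · simp [hj]
  · -- (iv)
    intro J t ⟨j, hjJ, htj⟩
    rw [hf]
    have hJ : J = insert j (J.erase j) := (Finset.insert_erase hjJ).symm
    have hje : j ∉ J.erase j := Finset.notMem_erase j J
    have hdisj : Disjoint (J.erase j).powerset ((J.erase j).powerset.image (insert j)) := by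
      rw [Finset.disjoint_left]
      intro I hI hI'
      simp only [Finset.mem_image, Finset.mem_powerset] at hI hI'
      obtain ⟨I', hI'S, rfl⟩ := hI'
      exact hje (hI (Finset.mem_insert_self j I'))
    have hinj : ∀ I ∈ (J.erase j).powerset, ∀ I' ∈ (J.erase j).powerset,
        insert j I = insert j I' → I = I' := by
      intro I hI I' hI' hEq
      simp only [Finset.mem_powerset] at hI hI'
      have h1 : j ∉ I := fun hx => hje (hI hx)
      have h2 : j ∉ I' := fun hx => hje (hI' hx)
      rw [← Finset.erase_insert h1, ← Finset.erase_insert h2, hEq]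
    conv_lhs => rw [hJ, Finset.powerset_insert]
    rw [Finset.sum_union hdisj, Finset.sum_image hinj, ← hJ, ← Finset.sum_add_distrib]
    apply Finset.sum_eq_zero
    intro I hI
    simp only [Finset.mem_powerset] at hI
    have hjI : j ∉ I := fun hx => hje (hI hx)
    have hcard : I.card ≤ (J.erase j).card := Finset.card_le_card hI
    have hJcard : J.card = (J.erase j).card + 1 := by
      rw [Finset.card_erase_of_mem hjJ]
      have := Finset.card_pos.mpr ⟨j, hjJ⟩
      omega
    have hfun : (fun i => if i ∈ insert j I then t i else 0)
        = (fun i => if i ∈ I then t i else 0) := by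
      funext i
      by_cases hij : i = j
      · subst hij
        simp [hjI, htj]
      · simp [Finset.mem_insert, hij]
    rw [Finset.card_insert_of_notMem hjI, hfun]
    have e1 : J.card - I.card = ((J.erase j).card - I.card) + 1 := by omega
    have e2 : J.card - (I.card + 1) = (J.erase j).card - I.card := by omega
    rw [e1, e2, pow_succ]
    ring
end

section
/- Let T ⊂ (ℝ^k)^N be a bounded set, with elements t = (t_1, …, t_N), t_i = (t_{i1}, …, t_{ik}) ∈ ℝ^k. Let h_1, …, h_N : ℝ^k → ℝ be such that each h_i is (M_i, ℓ∞)-Lipschitz with h_i(0) = 0. For j ≤ k let T_j = { (t_{1j}, …, t_{Nj}) : (t_1, …, t_N) ∈ T } ⊂ ℝ^N. Let ε_1, …, ε_N be independent Rademacher variables. Then E[ sup_{t ∈ T} | ∑_{i=1}^N ε_i h_i(t_i) | ] ≤ β_k ∑_{j=1}^k E[ sup_{s ∈ T_j} | ∑_{i=1}^N ε_i M_i s_i | ], where β_k = 3^k + 3^{k−1} − 2^k. -/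
/-!
Averaging over sign vectors turns each expectation into `(2 ^ N)⁻¹ * ∑ σ`. Adjoin the point `0`
to `T`, where every process vanishes; by the symmetry `σ ↦ -σ` the supremum of
`|∑ i, ε i * h i (t i)|` costs at most twice the supremum of `∑ i, ε i * h i (t i)` over
`insert 0 T`, which no longer has an absolute value.

That supremum is compared, one coordinate `i` at a time, with `∑ i, ∑ j, ε i j * M i * t i j`
for independent signs `ε i j`. For two points `x, y` the `ℓ∞`-Lipschitz bound gives a coordinate
`j` with `h i (x i) - h i (y i) ≤ |M i * x i j - M i * y i j|`. Average over `η ∈ {±1}ᵏ`, using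
`x` when `η j` agrees with the sign of that difference and `y` otherwise: the `j`-th term recovers
the full increment, and the other terms cancel. Bounding the supremum of `∑ j` by `∑ j` of the
suprema and restoring the absolute value gives the inequality with constant `2 ≤ β_k`.
-/

open MeasureTheory ProbabilityTheory

/-- A Rademacher random variable: takes values `1` and `-1` with probability `1/2` each. -/
def IsRademacher {Ω : Type*} [MeasurableSpace Ω] (μ : Measure Ω) (ε : Ω → ℝ) : Prop :=
  μ {ω | ε ω = 1} = 1/2 ∧ μ {ω | ε ω = -1} = 1/2

open Finset Set
open scoped ENNReal

def boolSign (b : Bool) : ℝ := if b then 1 else -1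

@[simp] lemma boolSign_true : boolSign true = 1 := rfl

@[simp] lemma boolSign_false : boolSign false = -1 := rfl

@[simp] lemma boolSign_not (b : Bool) : boolSign (!b) = -boolSign b := by cases b <;> simp

@[simp] lemma abs_boolSign (b : Bool) : |boolSign b| = 1 := by cases b <;> simp

lemma boolSign_injective : Function.Injective boolSign := by
  intro a b h
  cases a <;> cases b <;> norm_num [boolSign] at h <;> rfl

lemma Fintype.sum_pi_comp_eval {κ γ : Type*} [Fintype κ] [DecidableEq κ] [Fintype γ] (j : κ)
    (G : γ → ℝ) :
    ∑ τ : κ → γ, G (τ j) = Fintype.card γ ^ (Fintype.card κ - 1) * ∑ c, G c := by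
  rw [← (Equiv.funSplitAt j γ).symm.sum_comp, Fintype.sum_prod_type_right]
  simp [Equiv.funSplitAt, Equiv.piSplitAt, Fintype.card_subtype_compl, mul_sum]

lemma Fintype.sum_pi_comp_column {ι κ β : Type*} [Fintype ι] [DecidableEq ι] [Fintype κ]
    [DecidableEq κ] [Fintype β] (j : κ) (G : (ι → β) → ℝ) :
    ∑ τ : ι → κ → β, G (fun i => τ i j) =
      (Fintype.card β ^ Fintype.card ι) ^ (Fintype.card κ - 1) * ∑ σ, G σ := by
  rw [← (Equiv.piComm fun (_ : κ) (_ : ι) => β).sum_comp]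
  simpa using Fintype.sum_pi_comp_eval j G

lemma Fin.sum_pi_succ {n : ℕ} {β : Type*} [Fintype β] (P : (Fin (n + 1) → β) → ℝ) :
    ∑ τ, P τ = ∑ b, ∑ τ, P (Fin.cons b τ) := by
  rw [← (Fin.consEquiv fun _ => β).sum_comp, Fintype.sum_prod_type]
  rfl

lemma sum_boolSign_mul_eq_zero {κ : Type*} [Fintype κ] [DecidableEq κ] {j j' : κ} (h : j' ≠ j)
    (φ : Bool → ℝ) : ∑ η : κ → Bool, boolSign (η j') * φ (η j) = 0 := by
  have flip : Function.Involutive fun η : κ → Bool => Function.update η j' (!η j') := by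
    intro η
    ext i
    by_cases hi : i = j' <;> simp [Function.update, hi]
  have := Equiv.sum_comp (flip.toPerm _) fun η : κ → Bool => boolSign (η j') * φ (η j)
  simp only [Function.Involutive.coe_toPerm, Function.update, ↓reduceDIte, boolSign_not, h.symm,
    neg_mul, sum_neg_distrib] at this
  linarith

lemma abs_sum_boolSign_mul_le {ι : Type*} (s : Finset ι) (σ : ι → Bool) {a : ι → ℝ} {K : ℝ}
    (h : ∀ i ∈ s, |a i| ≤ K) : |∑ i ∈ s, boolSign (σ i) * a i| ≤ #s * K := by
  refine (abs_sum_le_sum_abs _ _).trans ?_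
  simpa using sum_le_card_nsmul s _ K fun i hi => by simpa using h i hi

lemma bddAbove_range_add_of_abs_le {X : Type*} {D E : X → ℝ} {c : ℝ}
    (hD : BddAbove (range D)) (hE : ∀ x, |E x| ≤ c) : BddAbove (range fun x => D x + E x) := by
  obtain ⟨b, hb⟩ := hD
  exact ⟨b + c, forall_mem_range.2 fun x =>
    add_le_add (hb (mem_range_self x)) ((le_abs_self _).trans (hE x))⟩

section Exchange

variable {X κ : Type*} [Fintype κ] [DecidableEq κ]

lemma sum_pi_bool_add_sum_boolSign_mul_eq (D : X → ℝ) (G : κ → X → ℝ) (j : κ) (x y : X) :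
    ∑ η : κ → Bool,
        (D (bif η j then x else y) + ∑ j', boolSign (η j') * G j' (bif η j then x else y)) =
      2 ^ (Fintype.card κ - 1) * (D x + D y + (G j x - G j y)) := by
  have hcross (j' : κ) (h : j' ≠ j) :
      ∑ η : κ → Bool, boolSign (η j') * G j' (bif η j then x else y) = 0 :=
    sum_boolSign_mul_eq_zero h fun b => G j' (bif b then x else y)
  have hD : ∑ η : κ → Bool, D (bif η j then x else y) = _ :=
    Fintype.sum_pi_comp_eval j fun b => D (bif b then x else y)
  have hG : ∑ η : κ → Bool, boolSign (η j) * G j (bif η j then x else y) = _ :=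
    Fintype.sum_pi_comp_eval j fun b => boolSign b * G j (bif b then x else y)
  rw [sum_add_distrib, sum_comm, sum_eq_single j (fun j' _ => hcross j') (by simp), hD, hG]
  simp only [Fintype.card_bool, Nat.cast_ofNat, Fintype.sum_bool, cond_true, cond_false,
    boolSign_true, boolSign_false, one_mul, neg_mul]
  ring

lemma two_pow_mul_sum_iSup_le [Nonempty X] (D F : X → ℝ) (G : κ → X → ℝ)
    (hG : ∀ η : κ → Bool, BddAbove (range fun x => D x + ∑ j, boolSign (η j) * G j x))
    (hF : ∀ x y, ∃ j, F x - F y ≤ |G j x - G j y|) :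
    2 ^ (Fintype.card κ - 1) * ∑ b, ⨆ x, (D x + boolSign b * F x) ≤
      ∑ η : κ → Bool, ⨆ x, (D x + ∑ j, boolSign (η j) * G j x) := by
  rw [Fintype.sum_bool, ← le_div_iff₀' (by positivity)]
  refine ciSup_add_ciSup_le fun x y => ?_
  rw [le_div_iff₀' (by positivity)]
  obtain ⟨j, hj⟩ := hF x y
  -- Evaluate at a point chosen by the `j`-th sign alone; the other signs then cancel.
  have hsum (u v : X) : 2 ^ (Fintype.card κ - 1) * (D u + D v + (G j u - G j v)) ≤
      ∑ η : κ → Bool, ⨆ x, (D x + ∑ j, boolSign (η j) * G j x) := by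
    rw [← sum_pi_bool_add_sum_boolSign_mul_eq]
    exact sum_le_sum fun η _ => le_ciSup (hG η) _
  simp only [boolSign_true, boolSign_false, one_mul, neg_mul]
  rw [abs_eq_max_neg, le_max_iff] at hj
  rcases hj with hj | hj
  · exact (mul_le_mul_of_nonneg_left (by linarith) (by positivity)).trans (hsum x y)
  · exact (mul_le_mul_of_nonneg_left (by linarith) (by positivity)).trans (hsum y x)

end Exchange

/-- The extra process `D` makes the induction work: the first coordinate is absorbed into `D`
while the others are compared, and the others are absorbed into `D` while the first is exchanged
by `two_pow_mul_sum_iSup_le`. -/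
theorem pow_mul_sum_iSup_le_sum_iSup {X κ : Type*} [Nonempty X] [Fintype κ] [DecidableEq κ]
    {N : ℕ} {K : ℝ} (f : Fin N → X → ℝ) (g : Fin N → κ → X → ℝ)
    (hf : ∀ i x, |f i x| ≤ K) (hg : ∀ i j x, |g i j x| ≤ K)
    (hfg : ∀ i x y, ∃ j, f i x - f i y ≤ |g i j x - g i j y|)
    (D : X → ℝ) (hD : BddAbove (range D)) :
    (2 ^ (Fintype.card κ - 1)) ^ N * ∑ σ : Fin N → Bool, ⨆ x, (D x + ∑ i, boolSign (σ i) * f i x) ≤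
      ∑ τ : Fin N → κ → Bool, ⨆ x, (D x + ∑ i, ∑ j, boolSign (τ i j) * g i j x) := by
  induction N generalizing D with
  | zero => simp
  | succ N ih =>
    set c : ℝ := 2 ^ (Fintype.card κ - 1)
    set vec : (Fin N → κ → Bool) → X → ℝ :=
      fun τ x => ∑ i, ∑ j, boolSign (τ i j) * g i.succ j x
    have hvec (τ : Fin N → κ → Bool) (x : X) : |vec τ x| ≤ N * (Fintype.card κ * K) := by
      calc |vec τ x| ≤ ∑ i, |∑ j, boolSign (τ i j) * g i.succ j x| := abs_sum_le_sum_abs _ _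
        _ ≤ ∑ _i : Fin N, Fintype.card κ * K := sum_le_sum fun i _ => by
          simpa using abs_sum_boolSign_mul_le univ (τ i) fun j _ => hg i.succ j x
        _ = N * (Fintype.card κ * K) := by simp
    have ih' (b : Bool) := ih (fun i => f i.succ) (fun i => g i.succ) (fun i => hf i.succ)
      (fun i => hg i.succ) (fun i => hfg i.succ) (fun x => D x + boolSign b * f 0 x)
      (bddAbove_range_add_of_abs_le hD fun x => by simpa using hf 0 x)
    calc c ^ (N + 1) * ∑ σ : Fin (N + 1) → Bool, ⨆ x, (D x + ∑ i, boolSign (σ i) * f i x)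
        = c * ∑ b, c ^ N * ∑ σ : Fin N → Bool,
            ⨆ x, (D x + boolSign b * f 0 x + ∑ i, boolSign (σ i) * f i.succ x) := by
          simp only [Fin.sum_pi_succ (β := Bool), Fin.sum_univ_succ, Fin.cons_zero, Fin.cons_succ,
            add_assoc, mul_sum, pow_succ', mul_assoc]
      _ ≤ c * ∑ b, ∑ τ : Fin N → κ → Bool, ⨆ x, (D x + boolSign b * f 0 x + vec τ x) := by
          gcongr with b
          exact ih' b
      _ = ∑ τ : Fin N → κ → Bool, c * ∑ b, ⨆ x, (D x + vec τ x + boolSign b * f 0 x) := by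
          simp only [mul_sum, add_right_comm _ _ (vec _ _)]
          exact sum_comm
      _ ≤ ∑ τ : Fin N → κ → Bool, ∑ η : κ → Bool,
            ⨆ x, (D x + vec τ x + ∑ j, boolSign (η j) * g 0 j x) := by
          gcongr with τ
          refine two_pow_mul_sum_iSup_le _ _ _ (fun η => ?_) (hfg 0)
          simpa only [add_assoc] using bddAbove_range_add_of_abs_le hD fun x =>
            (abs_add_le _ _).trans <| add_le_add (hvec τ x) <| by
              simpa using abs_sum_boolSign_mul_le univ η fun j _ => hg 0 j x
      _ = ∑ τ : Fin (N + 1) → κ → Bool, ⨆ x, (D x + ∑ i, ∑ j, boolSign (τ i j) * g i j x) := by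
          rw [Fin.sum_pi_succ, sum_comm]
          simp only [Fin.sum_univ_succ, Fin.cons_zero, Fin.cons_succ, vec]
          refine sum_congr rfl fun η _ => sum_congr rfl fun τ _ => ?_
          congr 1 with x
          ring

section InsertPoint

variable {α : Type*} (T : Set α) {z : α} {φ : α → ℝ}

lemma iSup_abs_le_iSup_add_iSup_neg (hz : φ z = 0)
    (h₁ : BddAbove (range fun x : ↥(insert z T) => φ x))
    (h₂ : BddAbove (range fun x : ↥(insert z T) => -φ x)) :
    ⨆ t : T, |φ t| ≤ (⨆ x : ↥(insert z T), φ x) + ⨆ x : ↥(insert z T), -φ x := by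
  have le₁ (t : α) (ht : t ∈ insert z T) : φ t ≤ ⨆ x : ↥(insert z T), φ x :=
    le_ciSup h₁ ⟨t, ht⟩
  have le₂ (t : α) (ht : t ∈ insert z T) : -φ t ≤ ⨆ x : ↥(insert z T), -φ x :=
    le_ciSup h₂ ⟨t, ht⟩
  have nonneg₁ := le₁ z (mem_insert z T)
  have nonneg₂ := le₂ z (mem_insert z T)
  rw [hz] at nonneg₁ nonneg₂
  refine Real.iSup_le (fun t => abs_le'.2 ⟨?_, ?_⟩) (by linarith)
  · linarith [le₁ t (mem_insert_of_mem z t.2)]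
  · linarith [le₂ t (mem_insert_of_mem z t.2)]

lemma iSup_insert_le_iSup_abs (hz : φ z = 0) (h : BddAbove (range fun t : T => |φ t|)) :
    ⨆ x : ↥(insert z T), φ x ≤ ⨆ t : T, |φ t| := by
  have : Nonempty ↥(insert z T) := ⟨⟨z, mem_insert z T⟩⟩
  refine ciSup_le fun ⟨x, hx⟩ => ?_
  rcases hx with rfl | hx
  · exact hz ▸ Real.iSup_nonneg fun _ => abs_nonneg _
  · exact (le_abs_self _).trans (le_ciSup h ⟨x, hx⟩)

end InsertPoint

lemma sum_iSup_abs_le_two_mul_sum_iSup_insert {α : Type*} {N : ℕ} {K : ℝ} (T : Set α) {z : α}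
    (f : Fin N → α → ℝ) (hf : ∀ i, ∀ t ∈ insert z T, |f i t| ≤ K) (hfz : ∀ i, f i z = 0) :
    ∑ σ : Fin N → Bool, ⨆ t : T, |∑ i, boolSign (σ i) * f i t| ≤
      2 * ∑ σ : Fin N → Bool, ⨆ x : ↥(insert z T), ∑ i, boolSign (σ i) * f i x := by
  set F : (Fin N → Bool) → α → ℝ := fun σ t => ∑ i, boolSign (σ i) * f i t
  have hFbdd (σ : Fin N → Bool) : BddAbove (range fun x : ↥(insert z T) => F σ x) :=
    ⟨N * K, forall_mem_range.2 fun x => (le_abs_self _).trans <| by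
      simpa using abs_sum_boolSign_mul_le univ σ fun i _ => hf i x x.2⟩
  have hneg (σ : Fin N → Bool) (t : α) : -F σ t = F (fun i => !σ i) t := by
    simp [F, sum_neg_distrib]
  have hflip : ∑ σ : Fin N → Bool, ⨆ x : ↥(insert z T), F (fun i => !σ i) x =
      ∑ σ, ⨆ x : ↥(insert z T), F σ x :=
    Equiv.sum_comp (Equiv.piCongrRight fun _ => Equiv.boolNot) fun σ => ⨆ x : ↥(insert z T), F σ x
  calc ∑ σ, ⨆ t : T, |F σ t|
      ≤ ∑ σ, ((⨆ x : ↥(insert z T), F σ x) + ⨆ x : ↥(insert z T), F (fun i => !σ i) x) := by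
        refine sum_le_sum fun σ _ => ?_
        have := iSup_abs_le_iSup_add_iSup_neg T (φ := F σ) (by simp [F, hfz]) (hFbdd σ)
          (by simpa only [hneg] using hFbdd _)
        simpa only [hneg] using this
    _ = 2 * ∑ σ, ⨆ x : ↥(insert z T), F σ x := by
        rw [sum_add_distrib, hflip]
        ring

lemma sum_iSup_sum_sum_le_pow_mul_sum_sum_iSup {X ι κ : Type*} [Nonempty X] [Fintype ι]
    [DecidableEq ι] [Fintype κ] [DecidableEq κ] {K : ℝ} (g : ι → κ → X → ℝ)
    (hg : ∀ i j x, |g i j x| ≤ K) :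
    ∑ τ : ι → κ → Bool, ⨆ x, ∑ i, ∑ j, boolSign (τ i j) * g i j x ≤
      (2 ^ (Fintype.card κ - 1)) ^ Fintype.card ι *
        ∑ j, ∑ σ : ι → Bool, ⨆ x, ∑ i, boolSign (σ i) * g i j x := by
  have hbdd (j : κ) (σ : ι → Bool) : BddAbove (range fun x => ∑ i, boolSign (σ i) * g i j x) :=
    ⟨_, forall_mem_range.2 fun x =>
      (le_abs_self _).trans (abs_sum_boolSign_mul_le univ σ fun i _ => hg i j x)⟩
  calc ∑ τ : ι → κ → Bool, ⨆ x, ∑ i, ∑ j, boolSign (τ i j) * g i j x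
      ≤ ∑ τ : ι → κ → Bool, ∑ j, ⨆ x, ∑ i, boolSign (τ i j) * g i j x := by
        refine sum_le_sum fun τ _ => ciSup_le fun x => ?_
        rw [sum_comm]
        exact sum_le_sum fun j _ => le_ciSup (hbdd j _) x
    _ = ∑ j, (2 ^ Fintype.card ι) ^ (Fintype.card κ - 1) *
          ∑ σ : ι → Bool, ⨆ x, ∑ i, boolSign (σ i) * g i j x := by
        rw [sum_comm]
        refine sum_congr rfl fun j _ => ?_
        simpa using Fintype.sum_pi_comp_column j fun σ => ⨆ x, ∑ i, boolSign (σ i) * g i j x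
    _ = _ := by rw [mul_sum, ← pow_mul, ← pow_mul, mul_comm (Fintype.card ι)]

theorem sum_iSup_abs_le_two_mul_sum_iSup_abs {α κ : Type*} [Fintype κ] [DecidableEq κ] {N : ℕ}
    {K : ℝ} (T : Set α) (z : α) (f : Fin N → α → ℝ) (g : Fin N → κ → α → ℝ)
    (hf : ∀ i, ∀ t ∈ insert z T, |f i t| ≤ K) (hg : ∀ i j, ∀ t ∈ insert z T, |g i j t| ≤ K)
    (hfg : ∀ i, ∀ s ∈ insert z T, ∀ t ∈ insert z T, ∃ j, f i s - f i t ≤ |g i j s - g i j t|)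
    (hfz : ∀ i, f i z = 0) (hgz : ∀ i j, g i j z = 0) :
    ∑ σ : Fin N → Bool, ⨆ t : T, |∑ i, boolSign (σ i) * f i t| ≤
      2 * ∑ j, ∑ σ : Fin N → Bool, ⨆ t : T, |∑ i, boolSign (σ i) * g i j t| := by
  set X := ↥(insert z T)
  have : Nonempty X := ⟨⟨z, mem_insert z T⟩⟩
  have hcontr := pow_mul_sum_iSup_le_sum_iSup (X := X) (fun i x => f i x) (fun i j x => g i j x)
    (fun i x => hf i x x.2) (fun i j x => hg i j x x.2) (fun i x y => hfg i x x.2 y y.2) 0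
    (by simp)
  have hsplit := sum_iSup_sum_sum_le_pow_mul_sum_sum_iSup (X := X) (fun i j x => g i j x)
    fun i j x => hg i j x x.2
  simp only [Pi.zero_apply, zero_add, Fintype.card_fin] at hcontr hsplit
  calc ∑ σ : Fin N → Bool, ⨆ t : T, |∑ i, boolSign (σ i) * f i t|
      ≤ 2 * ∑ σ : Fin N → Bool, ⨆ x : X, ∑ i, boolSign (σ i) * f i x :=
        sum_iSup_abs_le_two_mul_sum_iSup_insert T f hf hfz
    _ ≤ 2 * ∑ j, ∑ σ : Fin N → Bool, ⨆ x : X, ∑ i, boolSign (σ i) * g i j x := by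
        gcongr
        exact le_of_mul_le_mul_left (hcontr.trans hsplit) (by positivity)
    _ ≤ 2 * ∑ j, ∑ σ : Fin N → Bool, ⨆ t : T, |∑ i, boolSign (σ i) * g i j t| := by
        gcongr with j _ σ
        exact iSup_insert_le_iSup_abs T (φ := fun t => ∑ i, boolSign (σ i) * g i j t)
          (by simp [hgz]) ⟨_, forall_mem_range.2 fun t =>
            abs_sum_boolSign_mul_le univ σ fun i _ => hg i j t (mem_insert_of_mem z t.2)⟩

section Rademacher

variable {Ω : Type*} [MeasurableSpace Ω] {μ : Measure Ω} [IsProbabilityMeasure μ]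

lemma IsRademacher.map_eq {ε : Ω → ℝ} (hm : Measurable ε) (h : IsRademacher μ ε) :
    μ.map ε = (2 : ℝ≥0∞)⁻¹ • Measure.dirac 1 + (2 : ℝ≥0∞)⁻¹ • Measure.dirac (-1) := by
  have hdisj : Disjoint {ω | ε ω = 1} {ω | ε ω = -1} :=
    Set.disjoint_left.2 fun ω (h₁ : ε ω = 1) (h₂ : ε ω = -1) => by norm_num [h₁] at h₂
  have hae : ∀ᵐ ω ∂μ, ε ω = 1 ∨ ε ω = -1 := by
    rw [ae_iff, ← Set.compl_ofPred, prob_compl_eq_zero_iff, Set.ofPred_or,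
      measure_union hdisj (hm (measurableSet_singleton _)), h.1, h.2, ENNReal.add_halves]
    exact (hm (measurableSet_singleton _)).union (hm (measurableSet_singleton _))
  rw [(Measure.ae_eq_or_eq_iff_map_eq_dirac_add_dirac hm.aemeasurable (by norm_num)).1 hae]
  simp only [Set.preimage, Set.mem_singleton_iff, h.1, h.2, one_div]

lemma isRademacher_boolSign : IsRademacher (PMF.uniformOfFintype Bool).toMeasure boolSign := by
  have h₁ : {b | boolSign b = 1} = {true} := by ext b; cases b <;> norm_num [boolSign]
  have h₂ : {b | boolSign b = -1} = {false} := by ext b; cases b <;> norm_num [boolSign]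
  simp [IsRademacher, h₁, h₂]

/-- No measurability of `f` is needed: the joint law is carried by the finitely many sign
vectors. -/
theorem integral_comp_eq_sum_boolSign {ι : Type*} [Fintype ι] [DecidableEq ι] {ε : ι → Ω → ℝ}
    (hm : ∀ i, Measurable (ε i)) (hrad : ∀ i, IsRademacher μ (ε i)) (hind : iIndepFun ε μ)
    (f : (ι → ℝ) → ℝ) :
    ∫ ω, f (fun i => ε i ω) ∂μ =
      (2 ^ Fintype.card ι)⁻¹ * ∑ σ : ι → Bool, f (fun i => boolSign (σ i)) := by
  set ν := (PMF.uniformOfFintype Bool).toMeasure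
  set v : (ι → Bool) → ι → ℝ := fun σ i => boolSign (σ i)
  have hv : MeasurableEmbedding v :=
    { injective := fun σ σ' h => funext fun i => boolSign_injective (congrFun h i)
      measurable := .of_discrete
      measurableSet_image' := fun s _ => (s.toFinite.image v).measurableSet }
  have hlaw : μ.map (fun ω i => ε i ω) = (Measure.pi fun _ => ν).map v := by
    rw [hind.map_fun_eq_pi_map fun i => (hm i).aemeasurable,
      Measure.pi_map_pi fun _ => Measurable.of_discrete.aemeasurable]
    congr with i : 1
    rw [(hrad i).map_eq (hm i), isRademacher_boolSign.map_eq .of_discrete]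
  rw [← integral_map (measurable_pi_lambda _ hm).aemeasurable
      (hlaw ▸ hv.aestronglyMeasurable_map_iff.2 .of_discrete),
    hlaw, hv.integral_map, integral_fintype .of_finite]
  simp [Measure.real, ν, v, mul_sum]

end Rademacher

lemma exists_norm_le_abs_apply {ι : Type*} [Fintype ι] [Nonempty ι] (v : ι → ℝ) :
    ∃ j, ‖v‖ ≤ |v j| := by
  obtain ⟨j, -, hj⟩ := exists_max_image univ (fun j => |v j|) univ_nonempty
  exact ⟨j, (pi_norm_le_iff_of_nonneg (abs_nonneg _)).2 fun i => hj i (mem_univ i)⟩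

lemma exists_sub_le_abs_mul_sub {ι : Type*} [Fintype ι] [Nonempty ι] {φ : (ι → ℝ) → ℝ} {m : ℝ}
    (hφ : ∀ s t, |φ t - φ s| ≤ m * ‖t - s‖) (x y : ι → ℝ) :
    ∃ j, φ x - φ y ≤ |m * x j - m * y j| := by
  obtain ⟨j, hj⟩ := exists_norm_le_abs_apply (x - y)
  refine ⟨j, ?_⟩
  calc φ x - φ y ≤ m * ‖x - y‖ := (le_abs_self _).trans (hφ y x)
    _ ≤ |m| * |x j - y j| := mul_le_mul (le_abs_self _) hj (norm_nonneg _) (abs_nonneg _)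
    _ = |m * x j - m * y j| := by rw [← mul_sub, abs_mul]

theorem sum_iSup_abs_le_two_mul_sum_iSup_abs_of_lipschitz {N : ℕ} {κ : Type*} [Fintype κ]
    [DecidableEq κ] [Nonempty κ] (T : Set (Fin N → κ → ℝ)) (hT : Bornology.IsBounded T)
    (M : Fin N → ℝ) (h : Fin N → (κ → ℝ) → ℝ)
    (hLip : ∀ i, ∀ s t : κ → ℝ, |h i t - h i s| ≤ M i * ‖t - s‖) (h0 : ∀ i, h i 0 = 0) :
    ∑ σ : Fin N → Bool, ⨆ t : T, |∑ i, boolSign (σ i) * h i (t.1 i)| ≤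
      2 * ∑ j, ∑ σ : Fin N → Bool, ⨆ t : T, |∑ i, boolSign (σ i) * M i * t.1 i j| := by
  obtain ⟨C, hC⟩ := hT.exists_norm_le
  have hnorm : ∀ t ∈ insert 0 T, ∀ i, ‖t i‖ ≤ max C 0 := by
    rintro t (rfl | ht) i
    · simp
    · exact (norm_le_pi_norm t i).trans ((hC t ht).trans (le_max_left _ _))
  set K := ∑ i, |M i| * max C 0
  have hMK (i : Fin N) : |M i| * max C 0 ≤ K :=
    single_le_sum (f := fun i => |M i| * max C 0) (fun i _ => by positivity) (mem_univ i)
  have hf (i : Fin N) (t : Fin N → κ → ℝ) (ht : t ∈ insert 0 T) : |h i (t i)| ≤ K :=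
    calc |h i (t i)| ≤ M i * ‖t i‖ := by simpa [h0] using hLip i 0 (t i)
      _ ≤ |M i| * max C 0 :=
        mul_le_mul (le_abs_self _) (hnorm t ht i) (norm_nonneg _) (abs_nonneg _)
      _ ≤ K := hMK i
  have hg (i : Fin N) (j : κ) (t : Fin N → κ → ℝ) (ht : t ∈ insert 0 T) : |M i * t i j| ≤ K :=
    calc |M i * t i j| = |M i| * ‖t i j‖ := abs_mul _ _
      _ ≤ |M i| * max C 0 := by gcongr; exact (norm_le_pi_norm (t i) j).trans (hnorm t ht i)
      _ ≤ K := hMK i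
  simpa only [← mul_assoc] using sum_iSup_abs_le_two_mul_sum_iSup_abs T 0 _ _ hf hg
    (fun i s _ t _ => exists_sub_le_abs_mul_sub (hLip i) (s i) (t i)) h0 (fun i j => by simp)

lemma two_le_three_pow_add_three_pow_sub_two_pow {k : ℕ} (hk : 0 < k) :
    2 ≤ (3 : ℝ) ^ k + 3 ^ (k - 1) - 2 ^ k := by
  obtain ⟨m, rfl⟩ := Nat.exists_eq_add_of_lt hk
  have h₁ : (2 : ℝ) ^ m ≤ 3 ^ m := pow_le_pow_left₀ (by norm_num) (by norm_num) m
  have h₂ : (1 : ℝ) ≤ 3 ^ m := one_le_pow₀ (by norm_num)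
  simp only [zero_add, Nat.add_sub_cancel, pow_succ]
  linarith

/-- The norm on `Fin k → ℝ` is the sup norm, and the supremum over `s ∈ T_j` is written as the
supremum over `t ∈ T` of the `j`-th coordinates `t i j`. -/
theorem stmt5_general {Ω : Type*} [MeasurableSpace Ω] (μ : Measure Ω) [IsProbabilityMeasure μ]
    (N k : ℕ) (hk : 0 < k)
    (T : Set (Fin N → Fin k → ℝ)) (hTb : Bornology.IsBounded T)
    (M : Fin N → ℝ) (h : Fin N → (Fin k → ℝ) → ℝ)
    (hLip : ∀ i, ∀ s t : Fin k → ℝ, |h i t - h i s| ≤ M i * ‖t - s‖)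
    (h0 : ∀ i, h i 0 = 0)
    (ε : Fin N → Ω → ℝ)
    (hεmeas : ∀ i, Measurable (ε i))
    (hεrad : ∀ i, IsRademacher μ (ε i))
    (hεindep : iIndepFun ε μ) :
    ∫ ω, (⨆ t : T, |∑ i, ε i ω * h i ((t : Fin N → Fin k → ℝ) i)|) ∂μ ≤
      ((3 : ℝ) ^ k + 3 ^ (k - 1) - 2 ^ k) *
        ∑ j : Fin k, ∫ ω, (⨆ t : T, |∑ i, ε i ω * M i *
          (t : Fin N → Fin k → ℝ) i j|) ∂μ := by
  have : Nonempty (Fin k) := Fin.pos_iff_nonempty.1 hk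
  have hL : ∫ ω, (⨆ t : T, |∑ i, ε i ω * h i ((t : Fin N → Fin k → ℝ) i)|) ∂μ =
      (2 ^ N)⁻¹ * ∑ σ : Fin N → Bool, ⨆ t : T, |∑ i, boolSign (σ i) * h i (t.1 i)| := by
    simpa using integral_comp_eq_sum_boolSign hεmeas hεrad hεindep
      fun x => ⨆ t : T, |∑ i, x i * h i (t.1 i)|
  have hR (j : Fin k) : ∫ ω, (⨆ t : T, |∑ i, ε i ω * M i * (t : Fin N → Fin k → ℝ) i j|) ∂μ =
      (2 ^ N)⁻¹ * ∑ σ : Fin N → Bool, ⨆ t : T, |∑ i, boolSign (σ i) * M i * t.1 i j| := by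
    simpa using integral_comp_eq_sum_boolSign hεmeas hεrad hεindep
      fun x => ⨆ t : T, |∑ i, x i * M i * t.1 i j|
  have hnonneg : 0 ≤ ∑ j : Fin k, ∑ σ : Fin N → Bool,
      ⨆ t : T, |∑ i, boolSign (σ i) * M i * t.1 i j| :=
    sum_nonneg fun j _ => sum_nonneg fun σ _ => Real.iSup_nonneg fun _ => abs_nonneg _
  rw [hL, sum_congr rfl fun j _ => hR j, ← mul_sum, mul_left_comm _ ((2 : ℝ) ^ N)⁻¹]
  refine mul_le_mul_of_nonneg_left ?_ (by positivity)
  exact (sum_iSup_abs_le_two_mul_sum_iSup_abs_of_lipschitz T hTb M h hLip h0).trans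
    (mul_le_mul_of_nonneg_right (two_le_three_pow_add_three_pow_sub_two_pow hk) hnonneg)

/-- multivariate comparison for Rademacher complexity (Theorem 2.2 of the
paper), with constant `β_k = 3^k + 3^(k-1) - 2^k`.  The norm `‖·‖` on `Fin k → ℝ` is the
sup (ℓ∞) norm.  The supremum over `s ∈ T_j` of `|∑ i, ε_i M_i s_i|` is expressed as the
supremum over `t ∈ T` of `|∑ i, ε_i M_i t_{ij}|`. -/
theorem stmt5 {Ω : Type*} [MeasurableSpace Ω] (μ : Measure Ω) [IsProbabilityMeasure μ]
    (N k : ℕ) (hk : 0 < k)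
    (T : Set (Fin N → Fin k → ℝ)) (hTb : Bornology.IsBounded T) (hTne : T.Nonempty)
    (M : Fin N → ℝ) (h : Fin N → (Fin k → ℝ) → ℝ)
    (hLip : ∀ i, ∀ s t : Fin k → ℝ, |h i t - h i s| ≤ M i * ‖t - s‖)
    (h0 : ∀ i, h i 0 = 0)
    (ε : Fin N → Ω → ℝ)
    (hεmeas : ∀ i, Measurable (ε i))
    (hεrad : ∀ i, IsRademacher μ (ε i))
    (hεindep : iIndepFun ε μ) :
    ∫ ω, (⨆ t : T, |∑ i, ε i ω * h i ((t : Fin N → Fin k → ℝ) i)|) ∂μ ≤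
      ((3 : ℝ) ^ k + 3 ^ (k - 1) - 2 ^ k) *
        ∑ j : Fin k, ∫ ω, (⨆ t : T, |∑ i, ε i ω * M i *
          (t : Fin N → Fin k → ℝ) i j|) ∂μ :=
  stmt5_general μ N k hk T hTb M h hLip h0 ε hεmeas hεrad hεindep
end

section
/- Let f : ℝ^k → ℝ be first-order differentiable with partial derivatives ∂_j f satisfying |∂_j f(s)| ≤ F₁ for all s and j, and |∂_j f(s) − ∂_j f(t)| ≤ F₂ ‖t − s‖_∞ for all s, t and j. Fix c ∈ ℝ^k. For j ≤ k define φ_j : ℝ^k → ℝ by φ_j(s) = [ f(c + π̄_j s) − f(c + π̄_{j−1} s) ] / s_j − ∂_j f(c) if s_j ≠ 0, and φ_j(s) = ∂_j f(c + π̄_{j−1} s) − ∂_j f(c) if s_j = 0, where π̄_j maps (x_1, …, x_k) to (x_1, …, x_j, 0, …, 0). Then: φ_j(0) = 0; |φ_j(s)| ≤ 2 F₁ for all s; and φ_j is (F₂, ℓ∞)-Lipschitz on ℝ^k. Moreover, if ‖s‖_∞ ≤ R for some R > 0, then |φ_j(s)| ≤ F₂ R. -/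
open Classical in
/-- properties of the first-order remainder functions `φ_j` (Lemma on φ).
`g j s` is the `j`-th partial derivative of `f` at `s`, `π̄_m s` is formalized as
`fun i : Fin k => if (i : ℕ) < m then s i else 0` (keeping the first `m` coordinates), and the
norm `‖·‖` on `Fin k → ℝ` is the sup (ℓ∞) norm. -/
theorem stmt9 (k : ℕ) (F1 F2 : ℝ)
    (f : (Fin k → ℝ) → ℝ) (g : Fin k → (Fin k → ℝ) → ℝ)
    (hderiv : ∀ (j : Fin k) (s : Fin k → ℝ),
      HasDerivAt (fun x => f (Function.update s j x)) (g j s) (s j))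
    (hF1 : ∀ j s, |g j s| ≤ F1)
    (hF2 : ∀ j s t, |g j s - g j t| ≤ F2 * ‖t - s‖)
    (c : Fin k → ℝ)
    (φ : Fin k → (Fin k → ℝ) → ℝ)
    (hφ : ∀ (j : Fin k) (s : Fin k → ℝ), φ j s =
      if s j = 0 then
        g j (c + fun i : Fin k => if (i : ℕ) < (j : ℕ) then s i else 0) - g j c
      else
        (f (c + fun i : Fin k => if (i : ℕ) < (j : ℕ) + 1 then s i else 0) -
          f (c + fun i : Fin k => if (i : ℕ) < (j : ℕ) then s i else 0)) / s j - g j c) :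
    (∀ j, φ j 0 = 0) ∧
    (∀ j s, |φ j s| ≤ 2 * F1) ∧
    (∀ j s t, |φ j s - φ j t| ≤ F2 * ‖s - t‖) ∧
    (∀ R : ℝ, 0 < R → ∀ j s, ‖s‖ ≤ R → |φ j s| ≤ F2 * R) := by
  have hF2nn : ∀ _ : Fin k, (0:ℝ) ≤ F2 := by
    intro j
    by_contra h
    push_neg at h
    have h1 := hF2 j 0 (Pi.single j 1)
    have h2 : (0:ℝ) < ‖(Pi.single j 1 : Fin k → ℝ) - 0‖ := by
      rw [sub_zero, norm_pos_iff]
      intro hc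
      have := congrFun hc j
      simp at this
    nlinarith [abs_nonneg (g j 0 - g j (Pi.single j 1))]
  have hgcont : ∀ j : Fin k, Continuous (g j) := by
    intro j
    have hlip : LipschitzWith ⟨F2, hF2nn j⟩ (g j) := by
      apply LipschitzWith.of_dist_le_mul
      intro x y
      rw [Real.dist_eq, dist_eq_norm]
      calc |g j x - g j y| ≤ F2 * ‖y - x‖ := hF2 j x y
        _ = F2 * ‖x - y‖ := by rw [norm_sub_rev]
    exact hlip.continuous
  set A : Fin k → (Fin k → ℝ) → ℝ → (Fin k → ℝ) :=
    fun j s τ => Function.update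
      (c + fun i : Fin k => if (i : ℕ) < (j : ℕ) then s i else 0) j (c j + τ * s j) with hA
  have hAcont : ∀ j s, Continuous (fun τ => A j s τ) := by
    intro j s
    exact continuous_const.update j (by continuity)
  have hAnorm : ∀ (j : Fin k) (s t : Fin k → ℝ) (τ : ℝ), |τ| ≤ 1 →
      ‖A j t τ - A j s τ‖ ≤ ‖t - s‖ := by
    intro j s t τ hτ
    rw [pi_norm_le_iff_of_nonneg (norm_nonneg _)]
    intro i
    rcases eq_or_ne i j with rfl | hij
    · simp only [hA, Pi.sub_apply, Function.update_self]
      have : c i + τ * t i - (c i + τ * s i) = τ * (t i - s i) := by ring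
      rw [Real.norm_eq_abs, this, abs_mul]
      calc |τ| * |t i - s i| ≤ 1 * ‖t - s‖ := by
            apply mul_le_mul hτ ?_ (abs_nonneg _) zero_le_one
            exact norm_le_pi_norm (t - s) i
        _ = ‖t - s‖ := one_mul _
    · simp only [hA, Pi.sub_apply, Function.update_of_ne hij, Pi.add_apply]
      by_cases h : (i : ℕ) < (j : ℕ)
      · simp only [h, if_true]
        have : c i + t i - (c i + s i) = t i - s i := by ring
        rw [this]
        exact norm_le_pi_norm (t - s) i
      · simp [h]
  have hA0 : ∀ (j : Fin k) (τ : ℝ), A j 0 τ = c := by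
    intro j τ
    simp only [hA, Pi.zero_apply, mul_zero, add_zero, ite_self]
    have : (c + fun _ : Fin k => (0:ℝ)) = c := by funext i; simp
    rw [this, Function.update_eq_self]
  have hint : ∀ j s, IntervalIntegrable (fun τ => g j (A j s τ) - g j c)
      MeasureTheory.volume 0 1 := by
    intro j s
    exact (((hgcont j).comp (hAcont j s)).sub continuous_const).intervalIntegrable 0 1
  have key : ∀ j s, φ j s = ∫ τ in (0:ℝ)..1, (g j (A j s τ) - g j c) := by
    intro j s
    rw [hφ j s]
    by_cases hs : s j = 0
    · rw [if_pos hs]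
      have hAconst : ∀ τ : ℝ, A j s τ =
          c + fun i : Fin k => if (i : ℕ) < (j : ℕ) then s i else 0 := by
        intro τ
        simp only [hA, hs, mul_zero, add_zero]
        have : c j = (c + fun i : Fin k => if (i : ℕ) < (j : ℕ) then s i else 0) j := by
          simp
        rw [this, Function.update_eq_self]
      rw [show (fun τ => g j (A j s τ) - g j c) =
          fun _ : ℝ => (g j (c + fun i : Fin k => if (i : ℕ) < (j : ℕ) then s i else 0)
            - g j c) from funext fun τ => by rw [hAconst]]
      simp
    · rw [if_neg hs]
      set a : Fin k → ℝ := c + fun i : Fin k => if (i : ℕ) < (j : ℕ) then s i else 0 with ha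
      have haj : a j = c j := by simp [ha]
      have hupd1 : Function.update a j (c j + s j) =
          c + fun i : Fin k => if (i : ℕ) < (j : ℕ) + 1 then s i else 0 := by
        funext i
        rcases eq_or_ne i j with rfl | hij
        · simp
        · have hij' : (i : ℕ) ≠ (j : ℕ) := fun h => hij (Fin.ext h)
          simp only [Function.update_of_ne hij, ha, Pi.add_apply]
          congr 1
          by_cases h : (i : ℕ) < (j : ℕ)
          · rw [if_pos h, if_pos (by omega)]
          · rw [if_neg h, if_neg (by omega)]
      have hupd0 : Function.update a j (c j) = a := by
        rw [← haj, Function.update_eq_self]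
      have hd : ∀ u : ℝ, HasDerivAt (fun x => f (Function.update a j x))
          (g j (Function.update a j u)) u := by
        intro u
        have h := hderiv j (Function.update a j u)
        simpa [Function.update_idem] using h
      have hic : IntervalIntegrable (fun u => g j (Function.update a j u))
          MeasureTheory.volume (c j) (c j + s j) :=
        ((hgcont j).comp (continuous_const.update j continuous_id)).intervalIntegrable _ _
      have hftc : (∫ u in (c j)..(c j + s j), g j (Function.update a j u)) =
          f (Function.update a j (c j + s j)) - f (Function.update a j (c j)) :=
        intervalIntegral.integral_eq_sub_of_hasDerivAt (fun u _ => hd u) hic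
      have hAform : ∀ τ : ℝ, A j s τ = Function.update a j (c j + s j * τ) := by
        intro τ
        simp only [hA, ha, mul_comm]
      have hcov : (∫ τ in (0:ℝ)..1, g j (Function.update a j (c j + s j * τ))) =
          (s j)⁻¹ • ∫ u in (c j + s j * 0)..(c j + s j * 1), g j (Function.update a j u) := by
        exact intervalIntegral.integral_comp_add_mul
          (f := fun u => g j (Function.update a j u)) hs (c j)
      have hi1 : IntervalIntegrable (fun τ => g j (A j s τ)) MeasureTheory.volume 0 1 :=
        ((hgcont j).comp (hAcont j s)).intervalIntegrable 0 1
      rw [intervalIntegral.integral_sub hi1 (intervalIntegrable_const)]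
      rw [show (fun τ => g j (A j s τ)) =
          (fun τ => g j (Function.update a j (c j + s j * τ))) from
          funext fun τ => by rw [hAform]]
      rw [hcov]
      simp only [mul_zero, add_zero, mul_one]
      rw [hftc, hupd1, hupd0, intervalIntegral.integral_const]
      simp only [smul_eq_mul, sub_zero, one_mul]
      ring
  refine ⟨?_, ?_, ?_, ?_⟩
  · intro j
    rw [hφ j 0]
    rw [if_pos (show (0 : Fin k → ℝ) j = 0 from rfl)]
    have h0 : (c + fun i : Fin k => if (i:ℕ) < (j:ℕ) then (0 : Fin k → ℝ) i else 0) = c := by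
      funext i
      simp
    rw [h0, sub_self]
  · intro j s
    have hF1nn : (0:ℝ) ≤ F1 := le_trans (abs_nonneg _) (hF1 j 0)
    rw [key j s]
    have hb := intervalIntegral.norm_integral_le_of_norm_le_const (a := (0:ℝ)) (b := 1)
      (C := 2 * F1) (f := fun τ => g j (A j s τ) - g j c) ?_
    · rw [← Real.norm_eq_abs]
      simpa using hb
    · intro τ _
      rw [Real.norm_eq_abs]
      calc |g j (A j s τ) - g j c| ≤ |g j (A j s τ)| + |g j c| := abs_sub _ _
        _ ≤ F1 + F1 := add_le_add (hF1 j _) (hF1 j _)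
        _ = 2 * F1 := by ring
  · intro j s t
    rw [key j s, key j t]
    rw [← intervalIntegral.integral_sub (hint j s) (hint j t)]
    have hb := intervalIntegral.norm_integral_le_of_norm_le_const (a := (0:ℝ)) (b := 1)
      (C := F2 * ‖s - t‖)
      (f := fun τ => (g j (A j s τ) - g j c) - (g j (A j t τ) - g j c)) ?_
    · rw [← Real.norm_eq_abs]
      simpa using hb
    · intro τ hτ
      have hτ1 : |τ| ≤ 1 := by
        rw [Set.uIoc_of_le zero_le_one] at hτ
        rw [abs_le]
        constructor <;> [linarith [hτ.1]; exact hτ.2]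
      have h1 : (g j (A j s τ) - g j c) - (g j (A j t τ) - g j c)
          = g j (A j s τ) - g j (A j t τ) := by ring
      simp only [Real.norm_eq_abs, h1]
      calc |g j (A j s τ) - g j (A j t τ)| ≤ F2 * ‖A j t τ - A j s τ‖ := hF2 j _ _
        _ ≤ F2 * ‖t - s‖ :=
          mul_le_mul_of_nonneg_left (hAnorm j s t τ hτ1) (hF2nn j)
        _ = F2 * ‖s - t‖ := by rw [norm_sub_rev]
  · intro R hR j s hsR
    rw [key j s]
    have hb := intervalIntegral.norm_integral_le_of_norm_le_const (a := (0:ℝ)) (b := 1)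
      (C := F2 * R) (f := fun τ => g j (A j s τ) - g j c) ?_
    · rw [← Real.norm_eq_abs]
      simpa using hb
    · intro τ hτ
      have hτ1 : |τ| ≤ 1 := by
        rw [Set.uIoc_of_le zero_le_one] at hτ
        rw [abs_le]
        constructor <;> [linarith [hτ.1]; exact hτ.2]
      rw [Real.norm_eq_abs]
      calc |g j (A j s τ) - g j c| = |g j (A j s τ) - g j (A j 0 τ)| := by rw [hA0]
        _ ≤ F2 * ‖A j 0 τ - A j s τ‖ := hF2 j _ _
        _ ≤ F2 * ‖(0:Fin k → ℝ) - s‖ :=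
          mul_le_mul_of_nonneg_left (hAnorm j s 0 τ hτ1) (hF2nn j)
        _ = F2 * ‖s‖ := by rw [norm_sub_rev, sub_zero]
        _ ≤ F2 * R := mul_le_mul_of_nonneg_left hsR (hF2nn j)
end

section
/- Let f : ℝ^k → ℝ be first-order differentiable with partial derivatives ∂_j f satisfying |∂_j f(s)| ≤ F₁ for all s and j, and |∂_j f(s) − ∂_j f(t)| ≤ F₂ ‖t − s‖_∞ for all s, t and j. Fix c ∈ ℝ^k. For j ≤ k define φ_j : ℝ^k × ℝ^k → ℝ by φ_j(s, t) = [ f(c + s + π̄_j t) − f(c + s + π̄_{j−1} t) ] / t_j − ∂_j f(c) if t_j ≠ 0, and φ_j(s, t) = ∂_j f(c + s + π̄_{j−1} t) − ∂_j f(c) if t_j = 0, where π̄_j maps (x_1, …, x_k) to (x_1, …, x_j, 0, …, 0). Then: φ_j(0, 0) = 0; |φ_j(s, t)| ≤ 2 F₁ for all (s, t); φ_j is (2 F₂, ℓ∞)-Lipschitz on ℝ^k × ℝ^k (with the ℓ∞ norm on ℝ^{2k}); and if ‖s‖_∞ ≤ R and ‖t‖_∞ ≤ R for some R > 0, then |φ_j(s,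 t)| ≤ 2 F₂ R. -/
open Classical in
noncomputable def Wfun (k : ℕ) (c : Fin k → ℝ) (j : Fin k) (s t : Fin k → ℝ) (r : ℝ) :
    Fin k → ℝ :=
  fun i => c i + s i + (if (i:ℕ) < (j:ℕ) then (1:ℝ) else if i = j then r else 0) * t i

open Classical in
lemma Wfun_zero (k : ℕ) (c : Fin k → ℝ) (j : Fin k) (s t : Fin k → ℝ) :
    Wfun k c j s t 0 = c + s + fun i : Fin k => if (i : ℕ) < (j : ℕ) then t i else 0 := by
  funext i
  simp only [Wfun, Pi.add_apply]
  split_ifs with h1 h2 <;> ring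

open Classical in
lemma Wfun_one (k : ℕ) (c : Fin k → ℝ) (j : Fin k) (s t : Fin k → ℝ) :
    Wfun k c j s t 1 = c + s + fun i : Fin k => if (i : ℕ) < (j : ℕ) + 1 then t i else 0 := by
  funext i
  simp only [Wfun, Pi.add_apply]
  rcases lt_trichotomy (i:ℕ) (j:ℕ) with h | h | h
  · simp [h, Nat.lt_succ_of_lt h]
  · have hij : i = j := Fin.ext h
    subst hij
    simp
  · have h1 : ¬ (i:ℕ) < (j:ℕ) := by omega
    have h2 : ¬ (i:ℕ) < (j:ℕ) + 1 := by omega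
    have h3 : i ≠ j := by
      intro hh; subst hh; omega
    simp [h1, h2, h3]

open Classical in
lemma Wfun_deriv (k : ℕ) (f : (Fin k → ℝ) → ℝ) (g : Fin k → (Fin k → ℝ) → ℝ)
    (hderiv : ∀ (j : Fin k) (s : Fin k → ℝ),
      HasDerivAt (fun x => f (Function.update s j x)) (g j s) (s j))
    (c : Fin k → ℝ) (j : Fin k) (s t : Fin k → ℝ) (r : ℝ) :
    HasDerivAt (fun r => f (Wfun k c j s t r)) (g j (Wfun k c j s t r) * t j) r := by
  have hupd : ∀ r' : ℝ, Wfun k c j s t r' =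
      Function.update (Wfun k c j s t r) j (c j + s j + r' * t j) := by
    intro r'
    funext i
    by_cases h : i = j
    · subst h; simp [Wfun, Function.update_self]
    · simp [Wfun, Function.update_of_ne h, h]
  have hWJ : Wfun k c j s t r j = c j + s j + r * t j := by simp [Wfun]
  have key := hderiv j (Wfun k c j s t r)
  rw [hWJ] at key
  have inner : HasDerivAt (fun r' : ℝ => c j + s j + r' * t j) (t j) r := by
    simpa using ((hasDerivAt_id r).mul_const (t j)).const_add (c j + s j)
  have comp := HasDerivAt.comp r (by
    convert key using 1 : HasDerivAt (fun x => f (Function.update (Wfun k c j s t r) j x))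
      (g j (Wfun k c j s t r)) (c j + s j + r * t j)) inner
  have : (fun x => f (Function.update (Wfun k c j s t r) j x)) ∘
      (fun r' : ℝ => c j + s j + r' * t j) = fun r' => f (Wfun k c j s t r') := by
    funext r'
    simp [Function.comp, ← hupd r']
  rw [this] at comp
  simpa using comp

lemma Wfun_cont (k : ℕ) (c : Fin k → ℝ) (j : Fin k) (s t : Fin k → ℝ) :
    Continuous (Wfun k c j s t) := by
  refine continuous_pi fun i => ?_
  by_cases h1 : (i:ℕ) < (j:ℕ)
  · simp only [Wfun, if_pos h1]; fun_prop
  · by_cases h2 : i = j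
    · simp only [Wfun, if_neg h1, if_pos h2]; fun_prop
    · simp only [Wfun, if_neg h1, if_neg h2]; fun_prop

lemma Wfun_dist (k : ℕ) (c : Fin k → ℝ) (j : Fin k) (s t s' t' : Fin k → ℝ) (r : ℝ)
    (hr : |r| ≤ 1) :
    ‖Wfun k c j s t r - Wfun k c j s' t' r‖ ≤ ‖s - s'‖ + ‖t - t'‖ := by
  refine (pi_norm_le_iff_of_nonneg (by positivity)).mpr fun i => ?_
  have hs := norm_le_pi_norm (s - s') i
  have ht := norm_le_pi_norm (t - t') i
  simp only [Pi.sub_apply, Real.norm_eq_abs] at hs ht ⊢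
  set cf : ℝ := if (i:ℕ) < (j:ℕ) then (1:ℝ) else if i = j then r else 0 with hcf
  have hcf1 : |cf| ≤ 1 := by
    rw [hcf]; split_ifs <;> simp [hr]
  have heq : Wfun k c j s t r i - Wfun k c j s' t' r i
      = (s i - s' i) + cf * (t i - t' i) := by
    simp only [Wfun, hcf]; ring
  rw [heq]
  calc |(s i - s' i) + cf * (t i - t' i)| ≤ |s i - s' i| + |cf| * |t i - t' i| := by
        rw [← abs_mul]; exact abs_add_le _ _
    _ ≤ ‖s - s'‖ + ‖t - t'‖ := by
        nlinarith [abs_nonneg (t i - t' i), (abs_nonneg (t i - t' i)).trans ht]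


open Classical in
/-- properties of the two-argument first-order remainder functions
`φ_j(s, t)` (Lemma on φ, global version).  `g j s` is the `j`-th partial derivative of
`f` at `s`, `π̄_m t` is formalized as `fun i => if (i : ℕ) < m then t i else 0`, the
norm `‖·‖` on `Fin k → ℝ` is the sup (ℓ∞) norm, and the ℓ∞ norm on `ℝ^{2k}` of
`(s' - s, t' - t)` is `max ‖s' - s‖ ‖t' - t‖`. -/
theorem stmt10 (k : ℕ) (F1 F2 : ℝ)
    (f : (Fin k → ℝ) → ℝ) (g : Fin k → (Fin k → ℝ) → ℝ)
    (hderiv : ∀ (j : Fin k) (s : Fin k → ℝ),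
      HasDerivAt (fun x => f (Function.update s j x)) (g j s) (s j))
    (hF1 : ∀ j s, |g j s| ≤ F1)
    (hF2 : ∀ j s t, |g j s - g j t| ≤ F2 * ‖t - s‖)
    (c : Fin k → ℝ)
    (φ : Fin k → (Fin k → ℝ) → (Fin k → ℝ) → ℝ)
    (hφ : ∀ (j : Fin k) (s t : Fin k → ℝ), φ j s t =
      if t j = 0 then
        g j (c + s + fun i : Fin k => if (i : ℕ) < (j : ℕ) then t i else 0) - g j c
      else
        (f (c + s + fun i : Fin k => if (i : ℕ) < (j : ℕ) + 1 then t i else 0) -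
          f (c + s + fun i : Fin k => if (i : ℕ) < (j : ℕ) then t i else 0)) / t j
          - g j c) :
    (∀ j, φ j 0 0 = 0) ∧
    (∀ j s t, |φ j s t| ≤ 2 * F1) ∧
    (∀ j s t s' t', |φ j s t - φ j s' t'| ≤ 2 * F2 * max ‖s - s'‖ ‖t - t'‖) ∧
    (∀ R : ℝ, 0 < R → ∀ j s t, ‖s‖ ≤ R → ‖t‖ ≤ R → |φ j s t| ≤ 2 * F2 * R) := by
  -- F2 is nonnegative (as soon as some index exists)
  have hF2nn : ∀ _ : Fin k, 0 ≤ F2 := by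
    intro j
    haveI : Nonempty (Fin k) := ⟨j⟩
    have h := hF2 j (fun _ => 1) 0
    have h1 : ‖(0 : Fin k → ℝ) - (fun _ => (1:ℝ))‖ = 1 := by
      rw [zero_sub, norm_neg]
      simp [pi_norm_const (ι := Fin k) (1 : ℝ)]
    rw [h1, mul_one] at h
    exact le_trans (abs_nonneg _) h
  have hgcont : ∀ j : Fin k, Continuous (g j) := by
    intro j
    refine LipschitzWith.continuous (K := F2.toNNReal) ?_
    refine LipschitzWith.of_dist_le_mul fun a b => ?_
    rw [Real.dist_eq, dist_eq_norm, Real.coe_toNNReal _ (hF2nn j)]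
    calc |g j a - g j b| ≤ F2 * ‖b - a‖ := hF2 j a b
      _ = F2 * ‖a - b‖ := by rw [norm_sub_rev]
  have hint : ∀ (j : Fin k) (s t : Fin k → ℝ),
      IntervalIntegrable (fun r => g j (Wfun k c j s t r)) MeasureTheory.volume 0 1 :=
    fun j s t => ((hgcont j).comp (Wfun_cont k c j s t)).intervalIntegrable 0 1
  -- integral representation of φ
  have hrep : ∀ (j : Fin k) (s t : Fin k → ℝ),
      φ j s t = (∫ r in (0:ℝ)..1, g j (Wfun k c j s t r)) - g j c := by
    intro j s t
    rw [hφ]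
    by_cases ht : t j = 0
    · rw [if_pos ht]
      have hconst : ∀ r : ℝ, Wfun k c j s t r = Wfun k c j s t 0 := by
        intro r; funext i; simp only [Wfun]
        by_cases h2 : i = j
        · subst h2; simp [ht]
        · simp [h2]
      have h1 : (∫ r in (0:ℝ)..1, g j (Wfun k c j s t r)) = g j (Wfun k c j s t 0) := by
        rw [intervalIntegral.integral_congr (g := fun _ => g j (Wfun k c j s t 0))
          (fun r _ => by rw [hconst r])]
        simp
      rw [h1, Wfun_zero]
    · rw [if_neg ht]
      have FTC := intervalIntegral.integral_eq_sub_of_hasDerivAt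
        (f := fun r => f (Wfun k c j s t r)) (f' := fun r => g j (Wfun k c j s t r) * t j)
        (fun r _ => Wfun_deriv k f g hderiv c j s t r)
        ((((hgcont j).comp (Wfun_cont k c j s t)).mul continuous_const).intervalIntegrable 0 1)
      rw [intervalIntegral.integral_mul_const] at FTC
      rw [← Wfun_one k c j s t, ← Wfun_zero k c j s t, ← FTC]
      field_simp
  -- membership in uIoc gives |r| ≤ 1
  have hmem : ∀ r : ℝ, r ∈ Set.uIoc (0:ℝ) 1 → |r| ≤ 1 := by
    intro r hr
    rw [Set.uIoc_of_le (by norm_num : (0:ℝ) ≤ 1)] at hr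
    exact abs_le.mpr ⟨by linarith [hr.1], hr.2⟩
  refine ⟨?_, ?_, ?_, ?_⟩
  · -- φ j 0 0 = 0
    intro j
    have h0 : (fun i : Fin k => if (i:ℕ) < (j:ℕ) then (0 : Fin k → ℝ) i else 0)
        = (0 : Fin k → ℝ) := by
      funext i; simp
    have h1 : (c + fun _ : Fin k => (0:ℝ)) = c := by funext i; simp
    rw [hφ]
    simp [h0, h1]
  · -- |φ| ≤ 2 F1
    intro j s t
    rw [hrep j s t]
    have h1 : ‖∫ r in (0:ℝ)..1, g j (Wfun k c j s t r)‖ ≤ F1 * |1 - 0| := by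
      refine intervalIntegral.norm_integral_le_of_norm_le_const fun r _ => ?_
      simp only [Real.norm_eq_abs]
      exact hF1 j (Wfun k c j s t r)
    rw [Real.norm_eq_abs] at h1
    have h2 := hF1 j c
    calc |(∫ r in (0:ℝ)..1, g j (Wfun k c j s t r)) - g j c|
        ≤ |∫ r in (0:ℝ)..1, g j (Wfun k c j s t r)| + |g j c| := abs_sub _ _
      _ ≤ 2 * F1 := by simp at h1; linarith
  · -- Lipschitz bound
    intro j s t s' t'
    have hdiff : φ j s t - φ j s' t'
        = ∫ r in (0:ℝ)..1, (g j (Wfun k c j s t r) - g j (Wfun k c j s' t' r)) := by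
      rw [hrep j s t, hrep j s' t', intervalIntegral.integral_sub (hint j s t) (hint j s' t')]
      ring
    rw [hdiff]
    have hb : ∀ r ∈ Set.uIoc (0:ℝ) 1,
        ‖g j (Wfun k c j s t r) - g j (Wfun k c j s' t' r)‖
          ≤ 2 * F2 * max ‖s - s'‖ ‖t - t'‖ := by
      intro r hr
      rw [Real.norm_eq_abs]
      calc |g j (Wfun k c j s t r) - g j (Wfun k c j s' t' r)|
          ≤ F2 * ‖Wfun k c j s' t' r - Wfun k c j s t r‖ := hF2 j _ _
        _ ≤ F2 * (‖s' - s‖ + ‖t' - t‖) :=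
            mul_le_mul_of_nonneg_left (Wfun_dist k c j s' t' s t r (hmem r hr)) (hF2nn j)
        _ ≤ 2 * F2 * max ‖s - s'‖ ‖t - t'‖ := by
            rw [norm_sub_rev s' s, norm_sub_rev t' t]
            have h1 : ‖s - s'‖ ≤ max ‖s - s'‖ ‖t - t'‖ := le_max_left _ _
            have h2 : ‖t - t'‖ ≤ max ‖s - s'‖ ‖t - t'‖ := le_max_right _ _
            nlinarith [hF2nn j]
    have := intervalIntegral.norm_integral_le_of_norm_le_const hb
    simpa [Real.norm_eq_abs] using this
  · -- bound by 2 F2 R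
    intro R hR j s t hs ht
    have hWc : ∀ r : ℝ, Wfun k c j 0 0 r = c := by
      intro r; funext i; simp [Wfun]
    have hrep2 : φ j s t = ∫ r in (0:ℝ)..1, (g j (Wfun k c j s t r) - g j c) := by
      rw [hrep j s t, intervalIntegral.integral_sub (hint j s t) intervalIntegrable_const]
      simp
    rw [hrep2]
    have hb : ∀ r ∈ Set.uIoc (0:ℝ) 1,
        ‖g j (Wfun k c j s t r) - g j c‖ ≤ 2 * F2 * R := by
      intro r hr
      rw [Real.norm_eq_abs]
      calc |g j (Wfun k c j s t r) - g j c|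
          ≤ F2 * ‖c - Wfun k c j s t r‖ := hF2 j _ _
        _ = F2 * ‖Wfun k c j s t r - Wfun k c j 0 0 r‖ := by rw [norm_sub_rev, hWc r]
        _ ≤ F2 * (‖s - 0‖ + ‖t - 0‖) :=
            mul_le_mul_of_nonneg_left (Wfun_dist k c j s t 0 0 r (hmem r hr)) (hF2nn j)
        _ ≤ 2 * F2 * R := by
            rw [sub_zero, sub_zero]
            nlinarith [hF2nn j]
    have := intervalIntegral.norm_integral_le_of_norm_le_const hb
    simpa [Real.norm_eq_abs] using this
end

section
/- Let A_g, B_g, M_X, R_D, F₁, F₂ > 0 with A_g < B_g, let I_g = [A_g/B_g, B_g/A_g], and define ρ(z) = z^{−1} ln(1+z) − 1 for z ≠ 0 and ρ(0) = 0, ρ₀ = sup_{t ∈ I_g} |ρ(t−1)|, ρ₁ = sup_{t ∈ I_g} |ρ'(t−1)|, ψ₃ = min(2F₁, F₂ M_X R_D/2)/A_g, and ψ₆ = 2(ρ₀ + ψ₃ M_X ρ₁). Let g(s, t) = s ρ(t) and J = { (s, t−1) : |s| ≤ ψ₃ M_X, t ∈ I_g }. Then g is (ψ₆/2, ℓ∞)-Lipschitz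 on J, and |g(s, t)| ≤ (ψ₆/2) min(|s|, |t|) for all (s, t) ∈ J. -/
open Set

/-!
`ρ + 1` is the difference quotient (`dslope`) of `z ↦ log (1 + z)` at `0`, so the singularity
of `ρ` at `0` is removable and `ρ` is analytic on `(-1, ∞)`. On the compact interval `I_g - 1`
this gives `|ρ| ≤ ρ₀` and, by the mean value inequality, `ρ` is `ρ₁`-Lipschitz. Then
`s ρ(t) - s' ρ(t') = (s - s') ρ(t) + s' (ρ(t) - ρ(t'))` gives the Lipschitz bound, and
`ρ(0) = 0` gives `|ρ(t)| ≤ ρ₁ |t|`, hence the bound by the minimum.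
-/

theorem AnalyticOnNhd.dslope {𝕜 E : Type*} [NontriviallyNormedField 𝕜] [NormedAddCommGroup E]
    [NormedSpace 𝕜 E] [CompleteSpace E] {f : 𝕜 → E} {s : Set 𝕜} {a : 𝕜}
    (hf : AnalyticOnNhd 𝕜 f s) : AnalyticOnNhd 𝕜 (dslope f a) s := by
  intro x hx
  rcases eq_or_ne x a with rfl | hxa
  · obtain ⟨p, hp⟩ := hf x hx
    exact ⟨_, hp.has_fpower_series_dslope_fslope⟩
  · have hslope : AnalyticAt 𝕜 (fun z => (z - a)⁻¹ • (f z - f a)) x :=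
      ((analyticAt_id.sub analyticAt_const).inv (sub_ne_zero.2 hxa)).smul
        ((hf x hx).sub analyticAt_const)
    refine hslope.congr ?_
    filter_upwards [isOpen_ne.eventually_mem hxa] with z hz
    rw [dslope_of_ne _ hz, slope_def_module]

theorem analyticOnNhd_log_one_add :
    AnalyticOnNhd ℝ (fun z : ℝ => Real.log (1 + z)) (Ioi (-1)) := fun z hz =>
  (analyticAt_const.add analyticAt_id).log (show 0 < 1 + z by linarith [mem_Ioi.1 hz])

theorem eq_dslope_log_one_add_sub_one {ρ : ℝ → ℝ}
    (hρ : ∀ z : ℝ, ρ z = if z = 0 then 0 else Real.log (1 + z) / z - 1) :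
    ρ = fun z => dslope (fun z : ℝ => Real.log (1 + z)) 0 z - 1 := by
  funext z
  rw [hρ]
  split_ifs with hz
  · have hderiv : HasDerivAt (fun z : ℝ => Real.log (1 + z)) 1 0 := by
      simpa using ((hasDerivAt_id (0 : ℝ)).const_add 1).log (by norm_num)
    rw [hz, dslope_same, hderiv.deriv, sub_self]
  · rw [dslope_of_ne _ hz, slope_def_field]
    simp

theorem analyticOnNhd_of_eq_log_one_add_div_sub_one {ρ : ℝ → ℝ}
    (hρ : ∀ z : ℝ, ρ z = if z = 0 then 0 else Real.log (1 + z) / z - 1) :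
    AnalyticOnNhd ℝ ρ (Ioi (-1)) := by
  rw [eq_dslope_log_one_add_sub_one hρ]
  exact analyticOnNhd_log_one_add.dslope.sub analyticOnNhd_const

theorem le_ciSup_of_continuousOn {α : Type*} [TopologicalSpace α] {K : Set α}
    (hK : IsCompact K) {g : α → ℝ} (hg : ContinuousOn g K) {x : α} (hx : x ∈ K) :
    g x ≤ ⨆ t : K, g t :=
  le_ciSup (f := fun t : K => g t) (image_eq_range g K ▸ hK.bddAbove_image hg) ⟨x, hx⟩

theorem AnalyticOnNhd.abs_sub_le_iSup_abs_deriv_mul {f : ℝ → ℝ} {U K : Set ℝ}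
    (hf : AnalyticOnNhd ℝ f U) (hKU : K ⊆ U) (hK : IsCompact K) (hKc : Convex ℝ K)
    {x y : ℝ} (hx : x ∈ K) (hy : y ∈ K) :
    |f x - f y| ≤ (⨆ t : K, |deriv f t|) * |x - y| :=
  Convex.norm_image_sub_le_of_norm_deriv_le (fun u hu => (hf u (hKU hu)).differentiableAt)
    (fun _ hu => le_ciSup_of_continuousOn hK (hf.deriv.continuousOn.mono hKU).abs hu) hKc hy hx

section ProductBounds

variable {f : ℝ → ℝ} {a b c s s' x y : ℝ}

theorem abs_mul_sub_mul_le (hfx : |f x| ≤ a) (hf : |f x - f y| ≤ b * |x - y|)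
    (hs' : |s'| ≤ c) (hb : 0 ≤ b) :
    |s * f x - s' * f y| ≤ (a + c * b) * max |s - s'| |x - y| := by
  have hc : 0 ≤ c := (abs_nonneg _).trans hs'
  calc |s * f x - s' * f y| = |(s - s') * f x + s' * (f x - f y)| := by ring_nf
    _ ≤ |s - s'| * |f x| + |s'| * |f x - f y| := by
      rw [← abs_mul, ← abs_mul]; exact abs_add_le _ _
    _ ≤ max |s - s'| |x - y| * a + c * (b * max |s - s'| |x - y|) := by
      gcongr
      · exact le_max_left _ _
      · exact hf.trans (by gcongr; exact le_max_right _ _)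
    _ = (a + c * b) * max |s - s'| |x - y| := by ring

theorem abs_mul_le_mul_min (hfx : |f x| ≤ a) (hf : |f x| ≤ b * |x|) (hs : |s| ≤ c)
    (hb : 0 ≤ b) : |s * f x| ≤ (a + c * b) * min |s| |x| := by
  have ha : 0 ≤ a := (abs_nonneg _).trans hfx
  have hc : 0 ≤ c := (abs_nonneg _).trans hs
  rw [abs_mul]
  rcases min_cases |s| |x| with ⟨hmin, -⟩ | ⟨hmin, -⟩ <;> rw [hmin]
  · nlinarith [abs_nonneg s, mul_nonneg hc hb]
  · nlinarith [abs_nonneg x, abs_nonneg (f x), mul_le_mul hs hf (abs_nonneg _) hc]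

end ProductBounds

open Classical in
theorem stmt18_general (Ag Bg MX : ℝ)
    (hAg : 0 < Ag) (hAB : Ag < Bg)
    (ρ : ℝ → ℝ)
    (hρ : ∀ z : ℝ, ρ z = if z = 0 then 0 else Real.log (1 + z) / z - 1)
    (ρ0 ρ1 ψ3 ψ6 : ℝ)
    (hρ0 : ρ0 = ⨆ t : Set.Icc (Ag / Bg) (Bg / Ag), |ρ (t.1 - 1)|)
    (hρ1 : ρ1 = ⨆ t : Set.Icc (Ag / Bg) (Bg / Ag), |deriv ρ (t.1 - 1)|)
    (hψ6 : ψ6 = 2 * (ρ0 + ψ3 * MX * ρ1))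
    (J : Set (ℝ × ℝ))
    (hJ : J = {st : ℝ × ℝ | ∃ s t : ℝ, |s| ≤ ψ3 * MX ∧
      t ∈ Set.Icc (Ag / Bg) (Bg / Ag) ∧ st = (s, t - 1)}) :
    (∀ p ∈ J, ∀ q ∈ J,
      |p.1 * ρ p.2 - q.1 * ρ q.2| ≤ (ψ6 / 2) * max |p.1 - q.1| |p.2 - q.2|) ∧
    (∀ p ∈ J, |p.1 * ρ p.2| ≤ (ψ6 / 2) * min |p.1| |p.2|) := by
  set K := Icc (Ag / Bg) (Bg / Ag)
  have h1K : (1 : ℝ) ∈ K :=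
    ⟨(div_le_one (hAg.trans hAB)).2 hAB.le, (one_le_div hAg).2 hAB.le⟩
  have hKpos : K ⊆ Ioi 0 := fun t ht => (div_pos hAg (hAg.trans hAB)).trans_le ht.1
  have hf : AnalyticOnNhd ℝ (fun t => ρ (t - 1)) (Ioi 0) :=
    (analyticOnNhd_of_eq_log_one_add_div_sub_one hρ).comp
      (analyticOnNhd_id.sub analyticOnNhd_const) fun t ht => by
        simp only [mem_Ioi] at ht ⊢; linarith
  have hbound : ∀ t ∈ K, |ρ (t - 1)| ≤ ρ0 := fun t ht =>
    hρ0 ▸ le_ciSup_of_continuousOn isCompact_Icc (hf.continuousOn.mono hKpos).abs ht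
  have hlip : ∀ t ∈ K, ∀ t' ∈ K, |ρ (t - 1) - ρ (t' - 1)| ≤ ρ1 * |(t - 1) - (t' - 1)| :=
    fun t ht t' ht' => by
      rw [sub_sub_sub_cancel_right, hρ1]
      simpa only [deriv_comp_sub_const] using
        hf.abs_sub_le_iSup_abs_deriv_mul hKpos isCompact_Icc (convex_Icc _ _) ht ht'
  have hρ1_nonneg : 0 ≤ ρ1 := hρ1 ▸ Real.iSup_nonneg fun _ => abs_nonneg _
  have hψ6 : ψ6 / 2 = ρ0 + ψ3 * MX * ρ1 := by rw [hψ6]; ring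
  subst hJ
  refine ⟨?_, ?_⟩
  · rintro _ ⟨s, t, -, ht, rfl⟩ _ ⟨s', t', hs', ht', rfl⟩
    rw [hψ6]
    exact abs_mul_sub_mul_le (hbound t ht) (hlip t ht t' ht') hs' hρ1_nonneg
  · rintro _ ⟨s, t, hs, ht, rfl⟩
    rw [hψ6]
    refine abs_mul_le_mul_min (hbound t ht) ?_ hs hρ1_nonneg
    simpa [hρ] using hlip t ht 1 h1K

open Classical in
/-- bivariate Lipschitz property of `g(s,t) = s ρ(t)` on the set
`J = {(s, t - 1) : |s| ≤ ψ₃ M_X, t ∈ I_g}` (Lemma on bivariate Lipschitz continuity).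
Here `ρ(z) = z⁻¹ ln(1+z) - 1` for `z ≠ 0`, `ρ(0) = 0`, `ρ'` is formalized as `deriv ρ`,
and `ρ₀, ρ₁` are the suprema of `|ρ(t-1)|`, `|ρ'(t-1)|` over `t ∈ I_g`. -/
theorem stmt18 (Ag Bg MX RD F1 F2 : ℝ)
    (hAg : 0 < Ag) (hAB : Ag < Bg) (hMX : 0 < MX) (hRD : 0 < RD)
    (hF1 : 0 < F1) (hF2 : 0 < F2)
    (ρ : ℝ → ℝ)
    (hρ : ∀ z : ℝ, ρ z = if z = 0 then 0 else Real.log (1 + z) / z - 1)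
    (ρ0 ρ1 ψ3 ψ6 : ℝ)
    (hρ0 : ρ0 = ⨆ t : Set.Icc (Ag / Bg) (Bg / Ag), |ρ (t.1 - 1)|)
    (hρ1 : ρ1 = ⨆ t : Set.Icc (Ag / Bg) (Bg / Ag), |deriv ρ (t.1 - 1)|)
    (hψ3 : ψ3 = min (2 * F1) (F2 * MX * RD / 2) / Ag)
    (hψ6 : ψ6 = 2 * (ρ0 + ψ3 * MX * ρ1))
    (J : Set (ℝ × ℝ))
    (hJ : J = {st : ℝ × ℝ | ∃ s t : ℝ, |s| ≤ ψ3 * MX ∧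
      t ∈ Set.Icc (Ag / Bg) (Bg / Ag) ∧ st = (s, t - 1)}) :
    (∀ p ∈ J, ∀ q ∈ J,
      |p.1 * ρ p.2 - q.1 * ρ q.2| ≤ (ψ6 / 2) * max |p.1 - q.1| |p.2 - q.2|) ∧
    (∀ p ∈ J, |p.1 * ρ p.2| ≤ (ψ6 / 2) * min |p.1| |p.2|) :=
  stmt18_general Ag Bg MX hAg hAB ρ hρ ρ0 ρ1 ψ3 ψ6 hρ0 hρ1 hψ6 J hJ
end
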